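/- Let L' be a superintuitionistic logic with Box ⊊ L' such that L' is of infinite depth. Then there is some k such that every finite rooted poset that is a frame for L' has stack-depth at most k. -/

import Mathlib

/-! # Common framework: superintuitionistic logics, Kripke frames and models -/

/-! ## Intuitionistic propositional formulas -/

inductive Form : Type
  | var : ℕ → Form
  | bot : Form
  | top : Form
  | and : Form → Form → Form
  | or  : Form → Form → Form
  | imp : Form → Form → Form
deriving DecidableEq

namespace Form

/-- Implication depth of a formula. -/
def depth : Form → ℕ
  | var _ => 0
  | bot => 0
  | top => 0
  | and φ ψ => max φ.depth ψ.depth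
  | or φ ψ => max φ.depth ψ.depth
  | imp φ ψ => max φ.depth ψ.depth + 1

/-- All propositional variables of the formula are among `p_0, …, p_{m-1}`. -/
def varsLt (m : ℕ) : Form → Prop
  | var p => p < m
  | bot => True
  | top => True
  | and φ ψ => φ.varsLt m ∧ ψ.varsLt m
  | or φ ψ => φ.varsLt m ∧ ψ.varsLt m
  | imp φ ψ => φ.varsLt m ∧ ψ.varsLt m

/-- Uniform substitution. -/
def subst (σ : ℕ → Form) : Form → Form
  | var p => σ p
  | bot => bot
  | top => top
  | and φ ψ => and (φ.subst σ) (ψ.subst σ)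
  | or φ ψ => or (φ.subst σ) (ψ.subst σ)
  | imp φ ψ => imp (φ.subst σ) (ψ.subst σ)

/-- Biconditional. -/
def iff (φ ψ : Form) : Form := and (imp φ ψ) (imp ψ φ)

/-- Negation. -/
def neg (φ : Form) : Form := imp φ bot

end Form

/-! ## IPC and superintuitionistic logics -/

/-- A Hilbert-style axiomatization of intuitionistic propositional logic. -/
inductive IPC : Form → Prop
  | ax1 (φ ψ : Form) : IPC (.imp φ (.imp ψ φ))
  | ax2 (φ ψ χ : Form) :
      IPC (.imp (.imp φ (.imp ψ χ)) (.imp (.imp φ ψ) (.imp φ χ)))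
  | andE1 (φ ψ : Form) : IPC (.imp (.and φ ψ) φ)
  | andE2 (φ ψ : Form) : IPC (.imp (.and φ ψ) ψ)
  | andI (φ ψ : Form) : IPC (.imp φ (.imp ψ (.and φ ψ)))
  | orI1 (φ ψ : Form) : IPC (.imp φ (.or φ ψ))
  | orI2 (φ ψ : Form) : IPC (.imp ψ (.or φ ψ))
  | orE (φ ψ χ : Form) :
      IPC (.imp (.imp φ χ) (.imp (.imp ψ χ) (.imp (.or φ ψ) χ)))
  | botE (φ : Form) : IPC (.imp .bot φ)
  | topI : IPC .top
  | mp (φ ψ : Form) : IPC (.imp φ ψ) → IPC φ → IPC ψ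

/-- The set of theorems of IPC. -/
def IPCSet : Set Form := {φ | IPC φ}

/-- A superintuitionistic logic: a set of formulas containing all theorems of
IPC, closed under modus ponens and uniform substitution. -/
def IsSILogic (L : Set Form) : Prop :=
  IPCSet ⊆ L ∧
  (∀ φ ψ : Form, Form.imp φ ψ ∈ L → φ ∈ L → ψ ∈ L) ∧
  (∀ (φ : Form) (σ : ℕ → Form), φ ∈ L → φ.subst σ ∈ L)

/-- `oplus L Γ` is the least superintuitionistic logic containing `L` and `Γ`
(written `L ⊕ Γ`). -/
def oplus (L Γ : Set Form) : Set Form :=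
  ⋂₀ {M : Set Form | IsSILogic M ∧ L ⊆ M ∧ Γ ⊆ M}

/-- A logic is `n`-uniform if every formula is provably equivalent in it to a
formula of implication depth at most `n`. -/
def Uniform (L : Set Form) (n : ℕ) : Prop :=
  ∀ φ : Form, ∃ ψ : Form, ψ.depth ≤ n ∧ Form.iff φ ψ ∈ L

/-- A logic is locally tabular if over each finite tuple of variables there are
only finitely many formulas up to provable equivalence. -/
def LocallyTabular (L : Set Form) : Prop :=
  ∀ m : ℕ, ∃ Φ : Finset Form, ∀ φ : Form, φ.varsLt m → ∃ ψ ∈ Φ, Form.iff φ ψ ∈ L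

/-! ## Kripke frames (posets) -/

structure Frame : Type 1 where
  W : Type
  le : W → W → Prop
  refl : ∀ x, le x x
  trans : ∀ x y z, le x y → le y z → le x z
  antisymm : ∀ x y, le x y → le y x → x = y

namespace Frame

def lt (F : Frame) (a b : F.W) : Prop := F.le a b ∧ a ≠ b

/-- A valuation is persistent if it is preserved upwards. -/
def Persistent (F : Frame) (V : ℕ → F.W → Prop) : Prop :=
  ∀ p a b, F.le a b → V p a → V p b

/-- Kripke forcing. -/
def force (F : Frame) (V : ℕ → F.W → Prop) : Form → F.W → Prop
  | .var p, w => V p w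
  | .bot, _ => False
  | .top, _ => True
  | .and φ ψ, w => F.force V φ w ∧ F.force V ψ w
  | .or φ ψ, w => F.force V φ w ∨ F.force V ψ w
  | .imp φ ψ, w => ∀ v, F.le w v → F.force V φ v → F.force V ψ v

/-- `F ⊩ φ`. -/
def Valid (F : Frame) (φ : Form) : Prop :=
  ∀ V : ℕ → F.W → Prop, F.Persistent V → ∀ w : F.W, F.force V φ w

def Rooted (F : Frame) : Prop := ∃ r, ∀ w, F.le r w

/-- The subposet on a subset of the carrier. -/
def restrict (F : Frame) (s : Set F.W) : Frame where
  W := s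
  le a b := F.le a.1 b.1
  refl a := F.refl a.1
  trans a b c h1 h2 := F.trans a.1 b.1 c.1 h1 h2
  antisymm a b h1 h2 := Subtype.ext (F.antisymm a.1 b.1 h1 h2)

/-- The rooted upset `↑z`. -/
def up (F : Frame) (z : F.W) : Frame := F.restrict {w | F.le z w}

/-- There is a chain of `d` elements in `↑w` starting at `w`. -/
def hasChainUp (F : Frame) (w : F.W) (d : ℕ) : Prop :=
  ∃ f : Fin d → F.W, (∀ i : Fin d, (i : ℕ) = 0 → f i = w) ∧
    (∀ i j : Fin d, (i : ℕ) < (j : ℕ) → F.lt (f i) (f j))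

/-- The depth of `w` is `d`: the longest chain in `↑w` has exactly `d` elements. -/
def depthEq (F : Frame) (w : F.W) (d : ℕ) : Prop :=
  F.hasChainUp w d ∧ ¬ F.hasChainUp w (d + 1)

/-- The covering relation of the poset. -/
def covBy (F : Frame) (a b : F.W) : Prop :=
  F.lt a b ∧ ∀ c, F.lt a c → F.lt c b → False

end Frame

/-- A p-morphism of posets. -/
def IsPMorphism (P Q : Frame) (f : P.W → Q.W) : Prop :=
  (∀ a b, P.le a b → Q.le (f a) (f b)) ∧
  (∀ a b, Q.le (f a) b → ∃ a', P.le a a' ∧ f a' = b)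

/-- `Q` is a p-morphic image of `P`. -/
def PMorphicImage (P Q : Frame) : Prop :=
  ∃ f : P.W → Q.W, IsPMorphism P Q f ∧ Function.Surjective f

/-- Order isomorphism of posets. -/
def FrameIso (P Q : Frame) : Prop :=
  ∃ f : P.W → Q.W, Function.Bijective f ∧ ∀ a b, P.le a b ↔ Q.le (f a) (f b)

/-- The logic of a class of posets. -/
def LogK (K : Set Frame) : Set Form := {φ | ∀ F ∈ K, F.Valid φ}

/-- The logic of a single poset. -/
def FrameLog (F : Frame) : Set Form := {φ | F.Valid φ}

/-- `J` is a Yankov formula for the finite rooted poset `Q`: a finite poset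
refutes `J` exactly when `Q` is isomorphic to a rooted upset of one of its
p-morphic images. -/
def IsYankov (J : Form) (Q : Frame) : Prop :=
  ∀ P : Frame, Finite P.W →
    (¬ P.Valid J ↔ ∃ G : Frame, PMorphicImage P G ∧ ∃ z : G.W, FrameIso (G.up z) Q)

/-! ## Rooted Kripke models over `n` propositional variables -/

structure Model (n : ℕ) : Type 1 where
  W : Type
  le : W → W → Prop
  refl : ∀ x, le x x
  trans : ∀ x y z, le x y → le y z → le x z
  antisymm : ∀ x y, le x y → le y x → x = y
  root : W
  rooted : ∀ w, le root w
  col : W → Set (Fin n)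
  mono : ∀ a b, le a b → col a ⊆ col b

namespace Model

/-- The underlying poset of a model. -/
def frame {n : ℕ} (M : Model n) : Frame :=
  ⟨M.W, M.le, M.refl, M.trans, M.antisymm⟩

def force {n : ℕ} (M : Model n) : Form → M.W → Prop
  | .var p, w => ∃ h : p < n, (⟨p, h⟩ : Fin n) ∈ M.col w
  | .bot, _ => False
  | .top, _ => True
  | .and φ ψ, w => M.force φ w ∧ M.force ψ w
  | .or φ ψ, w => M.force φ w ∨ M.force ψ w
  | .imp φ ψ, w => ∀ v, M.le w v → M.force φ v → M.force ψ v

/-- Satisfaction at the root of the model. -/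
def Sat {n : ℕ} (M : Model n) (φ : Form) : Prop := M.force φ M.root

/-- (Full) bisimilarity of two rooted models. -/
def Bisim {n : ℕ} (M N : Model n) : Prop :=
  ∃ S : M.W → N.W → Prop,
    S M.root N.root ∧
    (∀ a b, S a b → M.col a = N.col b) ∧
    (∀ a b a', S a b → M.le a a' → ∃ b', N.le b b' ∧ S a' b') ∧
    (∀ a b b', S a b → N.le b b' → ∃ a', M.le a a' ∧ S a' b')

/-- `k`-bisimilarity of the points `x, y`, via a decreasing chain
`S k ⊆ ⋯ ⊆ S 0` of relations. -/
def NBisimAt {n : ℕ} (M N : Model n) (k : ℕ) (x : M.W) (y : N.W) : Prop :=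
  ∃ S : ℕ → M.W → N.W → Prop,
    (∀ j a b, S (j + 1) a b → S j a b) ∧
    S k x y ∧
    (∀ a b, S 0 a b → M.col a = N.col b) ∧
    (∀ j a b a', j < k → S (j + 1) a b → M.le a a' →
        ∃ b', N.le b b' ∧ S j a' b') ∧
    (∀ j a b b', j < k → S (j + 1) a b → N.le b b' →
        ∃ a', M.le a a' ∧ S j a' b')

/-- `k`-bisimilarity of two rooted models. -/
def NBisim {n : ℕ} (M N : Model n) (k : ℕ) : Prop :=
  NBisimAt M N k M.root N.root

/-- The submodel on the rooted upset `↑z`. -/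
def up {n : ℕ} (M : Model n) (z : M.W) : Model n where
  W := {w : M.W // M.le z w}
  le a b := M.le a.1 b.1
  refl a := M.refl a.1
  trans a b c h1 h2 := M.trans a.1 b.1 c.1 h1 h2
  antisymm a b h1 h2 := Subtype.ext (M.antisymm a.1 b.1 h1 h2)
  root := ⟨z, M.refl z⟩
  rooted w := w.2
  col a := M.col a.1
  mono a b h := M.mono a.1 b.1 h

/-- `(M, x) ≤ₖ (N, y)`: there is `z ≥ x` such that `(↑z, z)` is `k`-bisimilar
with `(N, y)`. -/
def LeBisim {n : ℕ} (M N : Model n) (k : ℕ) : Prop :=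
  ∃ z : M.W, M.le M.root z ∧ NBisim (M.up z) N k

/-- Two points of a model are bisimilar. -/
def PointsBisim {n : ℕ} (M : Model n) (a b : M.W) : Prop :=
  ∃ S : M.W → M.W → Prop,
    S a b ∧
    (∀ x y, S x y → M.col x = M.col y) ∧
    (∀ x y x', S x y → M.le x x' → ∃ y', M.le y y' ∧ S x' y') ∧
    (∀ x y y', S x y → M.le y y' → ∃ x', M.le x x' ∧ S x' y')

/-- A model over `n` variables is (`n`-)generated if it contains no two
distinct bisimilar points. -/
def Generated {n : ℕ} (M : Model n) : Prop :=
  ∀ a b : M.W, M.PointsBisim a b → a = b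

/-- Isomorphism of models: a root-preserving, color-preserving order
isomorphism. -/
def Iso {n : ℕ} (M N : Model n) : Prop :=
  ∃ f : M.W → N.W, Function.Bijective f ∧ f M.root = N.root ∧
    (∀ a b, M.le a b ↔ N.le (f a) (f b)) ∧ (∀ a, N.col (f a) = M.col a)

/-- `M` is a model over the class of posets `K`: its underlying poset is a
p-morphic image of a rooted upset of a member of `K`. -/
def InClass {n : ℕ} (K : Set Frame) (M : Model n) : Prop :=
  ∃ F ∈ K, ∃ z : F.W, PMorphicImage (F.up z) M.frame

/-- The model on the rooted upset `↑z` of a frame `F`, with coloring `c`. -/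
def ofFrame (F : Frame) (z : F.W) (n : ℕ) (c : (F.up z).W → Set (Fin n))
    (hc : ∀ a b : (F.up z).W, (F.up z).le a b → c a ⊆ c b) : Model n where
  W := (F.up z).W
  le := (F.up z).le
  refl := (F.up z).refl
  trans := (F.up z).trans
  antisymm := (F.up z).antisymm
  root := ⟨z, F.refl z⟩
  rooted w := w.2
  col := c
  mono := hc

end Model

/-! ## Boolean sums and stacks -/

/-- A (finite rooted) poset is a Boolean sum: it is rooted, covers decrease the
depth by exactly one, and every point of depth `k+1` lies below every point of
depth `k`. -/
def IsBooleanSum (F : Frame) : Prop :=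
  F.Rooted ∧
  (∀ a b da db, F.covBy a b → F.depthEq a da → F.depthEq b db → da = db + 1) ∧
  (∀ a b k, F.depthEq a (k + 1) → F.depthEq b k → F.le a b)

/-- `F` contains a `k`-stack: `k` consecutive layers (sets of points of equal
depth) each containing at least two points. -/
def HasStack (F : Frame) (k : ℕ) : Prop :=
  ∃ j : ℕ, ∀ i : ℕ, j ≤ i → i < j + k →
    ∃ a b : F.W, a ≠ b ∧ F.depthEq a i ∧ F.depthEq b i

/-! ## The posets Q₁, …, Q₈ -/

def q1le : Fin 4 → Fin 4 → Bool := fun a b =>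
  a = b || a = 0 || (a = 1 && b = 3)
def q2le : Fin 5 → Fin 5 → Bool := fun a b =>
  a = b || a = 0 || (a = 1 && (b = 3 || b = 4)) || (a = 2 && b = 4)
def q3le : Fin 5 → Fin 5 → Bool := fun a b =>
  a = b || a = 0 || (a = 1 && b = 4) || (a = 2 && (b = 3 || b = 4)) ||
    (a = 3 && b = 4)
def q4le : Fin 5 → Fin 5 → Bool := fun a b =>
  a = b || a = 0 || ((a = 1 || a = 2) && (b = 3 || b = 4))
def q5le : Fin 6 → Fin 6 → Bool := fun a b =>
  a = b || a = 0 || b = 5 || ((a = 1 || a = 2) && (b = 3 || b = 4))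
def q6le : Fin 4 → Fin 4 → Bool := fun a b =>
  a = b || a = 0 || b = 3
def q7le : Fin 5 → Fin 5 → Bool := fun a b =>
  a = b || a = 0 || (a = 1 && b = 3) || (a = 2 && b = 4)
def q8le : Fin 4 → Fin 4 → Bool := fun a b =>
  a = b || a = 0

/-- `Q₁`: root `0`; immediate successors `1`, `2`; `2` maximal; `3` the unique
(maximal) immediate successor of `1`. -/
def Q1f : Frame :=
  ⟨Fin 4, fun a b => q1le a b = true, by decide, by decide, by decide⟩
/-- `Q₂`: root `0`; immediate successors `1`, `2`; maximal points `3`, `4`;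
`1 < 3`, `1 < 4`, `2 < 4`, `2 ≮ 3`. -/
def Q2f : Frame :=
  ⟨Fin 5, fun a b => q2le a b = true, by decide, by decide, by decide⟩
/-- `Q₃`: root `0`; immediate successors `1`, `2`; `3` covers `2`; top `4`
with `1 < 4` and `3 < 4`. -/
def Q3f : Frame :=
  ⟨Fin 5, fun a b => q3le a b = true, by decide, by decide, by decide⟩
/-- `Q₄`: root `0`; `1`, `2` cover the root; maximal `3`, `4` above both `1`
and `2`. -/
def Q4f : Frame :=
  ⟨Fin 5, fun a b => q4le a b = true, by decide, by decide, by decide⟩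
/-- `Q₅`: `Q₄` with a greatest element `5` added on top. -/
def Q5f : Frame :=
  ⟨Fin 6, fun a b => q5le a b = true, by decide, by decide, by decide⟩
/-- `Q₆`: the diamond. -/
def Q6f : Frame :=
  ⟨Fin 4, fun a b => q6le a b = true, by decide, by decide, by decide⟩
/-- `Q₇`: root `0`; `1 < 3`, `2 < 4`, and no other strict relations above the
root. -/
def Q7f : Frame :=
  ⟨Fin 5, fun a b => q7le a b = true, by decide, by decide, by decide⟩
/-- `Q₈`: a root with three pairwise incomparable maximal points. -/
def Q8f : Frame :=
  ⟨Fin 4, fun a b => q8le a b = true, by decide, by decide, by decide⟩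

/-! ## Particular logics -/

/-- The one-element poset. -/
def unitFrame : Frame :=
  ⟨PUnit, fun _ _ => True, fun _ => trivial, fun _ _ _ _ _ => trivial,
    fun a b _ _ => Subsingleton.elim a b⟩

/-- The two-element chain. -/
def chain2 : Frame :=
  ⟨Bool, fun a b => a ≤ b, le_refl, fun _ _ _ => le_trans,
    fun _ _ => le_antisymm⟩

/-- Classical propositional logic: the logic of the one-element poset. -/
def CPC : Set Form := FrameLog unitFrame

/-- The logic of the two-element chain. -/
def Sme : Set Form := FrameLog chain2

/-- The weak Peirce law `(q → p) ∨ (((p → q) → p) → p)`. -/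
def wPLax : Form :=
  .or (.imp (.var 1) (.var 0))
    (.imp (.imp (.imp (.var 0) (.var 1)) (.var 0)) (.var 0))

/-- The logic `wPL = IPC ⊕ (q → p) ∨ (((p → q) → p) → p)`. -/
def wPL : Set Form := oplus IPCSet {wPLax}

/-- The bounded-width-2 axiom `⋁_{i≤2} (pᵢ → ⋁_{j≠i} pⱼ)`. -/
def bw2ax : Form :=
  .or (.imp (.var 0) (.or (.var 1) (.var 2)))
    (.or (.imp (.var 1) (.or (.var 0) (.var 2)))
      (.imp (.var 2) (.or (.var 0) (.var 1))))

/-- The axiom `¬p ∨ ¬¬p`. -/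
def kcax : Form := .or (Form.neg (.var 0)) (Form.neg (Form.neg (.var 0)))

/-- The logic `Box = wPL ⊕ bw₂ ⊕ (¬p ∨ ¬¬p)`. -/
def BoxLogic : Set Form := oplus wPL {bw2ax, kcax}

/-- The bounded-depth formulas. -/
def bd : ℕ → Form
  | 0 => .var 0
  | n + 1 => .or (.var (n + 1)) (.imp (.var (n + 1)) (bd n))

/-- The logic `BD_n = IPC ⊕ bd_n`. -/
def BD (n : ℕ) : Set Form := oplus IPCSet {bd n}

/-- A logic is of finite depth if it contains some `BD_n`. -/
def FiniteDepth (L : Set Form) : Prop := ∃ n, BD n ⊆ L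

/-! ## The Rieger–Nishimura ladder -/

/-- Points of the Rieger–Nishimura ladder: `inl k = L_k`, `inr k = R_k`. -/
abbrev RNpt : Type := ℕ ⊕ ℕ

/-- The covering relation of the Rieger–Nishimura ladder (`rnCov a b` means
`a ⋖ b`, i.e. `b` is an immediate successor of `a`). -/
inductive rnCov : RNpt → RNpt → Prop
  | ll (k : ℕ) : rnCov (.inl (k + 1)) (.inl k)
  | rr (k : ℕ) : rnCov (.inr (k + 1)) (.inr k)
  | rl (k : ℕ) : rnCov (.inr (k + 1)) (.inl k)
  | lr (k : ℕ) : rnCov (.inl (k + 2)) (.inr k)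

private def rnIdx : RNpt → ℕ
  | .inl k => 2 * k
  | .inr k => 2 * k + 1

private theorem rnCov_idx {a b : RNpt} (h : rnCov a b) : rnIdx b < rnIdx a := by
  cases h <;> simp [rnIdx] <;> omega

private theorem rnLe_idx {a b : RNpt} (h : Relation.ReflTransGen rnCov a b) :
    rnIdx b ≤ rnIdx a := by
  induction h with
  | refl => exact le_rfl
  | tail _ h₂ ih => exact le_trans (le_of_lt (rnCov_idx h₂)) ih

private theorem rnIdx_inj {a b : RNpt} (h : rnIdx a = rnIdx b) : a = b := by
  rcases a with a | a <;> rcases b with b | b <;> simp [rnIdx] at h ⊢ <;> omega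

/-- The Rieger–Nishimura ladder as a poset: the order is the reflexive
transitive closure of the covering relation. -/
def RN : Frame where
  W := RNpt
  le a b := Relation.ReflTransGen rnCov a b
  refl _ := Relation.ReflTransGen.refl
  trans _ _ _ h1 h2 := h1.trans h2
  antisymm _ _ h1 h2 := rnIdx_inj (le_antisymm (rnLe_idx h2) (rnLe_idx h1))

/-! ## Combs -/

def combLe (n : ℕ) : (Fin n ⊕ Fin n) → (Fin n ⊕ Fin n) → Prop
  | .inl i, .inl j => i ≤ j
  | .inl i, .inr j => i ≤ j
  | .inr i, .inr j => i = j
  | .inr _, .inl _ => False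

/-- The `n`-comb: base points `x_1 ≤ … ≤ x_n` (encoded `inl 0, …, inl (n-1)`)
and maximal teeth `y_1, …, y_n` (encoded `inr 0, …, inr (n-1)`), with
`x_i ≤ y_j ↔ i ≤ j` and the teeth pairwise incomparable. -/
def Comb (n : ℕ) : Frame where
  W := Fin n ⊕ Fin n
  le := combLe n
  refl := by rintro (i | i) <;> simp [combLe]
  trans := by
    rintro (i | i) (j | j) (k | k) h1 h2 <;> simp only [combLe] at * <;>
      first
        | exact le_trans h1 h2
        | exact h2 ▸ h1
  antisymm := by
    rintro (i | i) (j | j) h1 h2 <;> simp only [combLe] at * <;>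
      first
        | exact congrArg Sum.inl (le_antisymm h1 h2)
        | exact congrArg Sum.inr h1

/-- A broken `m`-comb: (isomorphic to) a subposet of the `m`-comb containing
all of the base points `x_1, …, x_m`. -/
def IsBrokenComb (F : Frame) (m : ℕ) : Prop :=
  ∃ s : Set (Comb m).W, (∀ i : Fin m, Sum.inl i ∈ s) ∧
    FrameIso F ((Comb m).restrict s)

/-- The logic of the class of all combs. -/
def LFC : Set Form := LogK {F | ∃ n, F = Comb n}

/-! ## The stacked models `M_n^k` and `N_n^k` -/

/-- Height index of a point: layer `j` (from the top) has index `j`, the root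
(`none`) has index `k+1`. -/
def stackIdx (k : ℕ) : Option (Fin (k + 1) × Bool) → ℕ
  | none => k + 1
  | some (j, _) => j

/-- Size of the color (an initial segment of the variables): the left point
(`false`) of layer `j` gets `1^{n-j}0^j`, the right point (`true`) gets
`1^{n-j-1}0^{j+1}`, and the root gets `1^r0^{n-r}`. -/
def stackColSize (n k r : ℕ) : Option (Fin (k + 1) × Bool) → ℕ
  | none => r
  | some (j, false) => n - j
  | some (j, true) => n - ((j : ℕ) + 1)

private theorem stackColSize_le (n k r : ℕ) (hr : r ≤ n - (k + 1))
    {a b : Option (Fin (k + 1) × Bool)} (h : stackIdx k b < stackIdx k a) :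
    stackColSize n k r a ≤ stackColSize n k r b := by
  rcases a with _ | ⟨j, _ | _⟩ <;> rcases b with _ | ⟨j', _ | _⟩ <;>
    simp only [stackIdx, stackColSize] at * <;> omega

/-- The common shape of `M_n^k` and `N_n^k`, with root color `1^r0^{n-r}`:
`k+1` layers of two points stacked on top of a root. -/
def stackModel (n k r : ℕ) (hr : r ≤ n - (k + 1)) : Model n where
  W := Option (Fin (k + 1) × Bool)
  le a b := a = b ∨ stackIdx k b < stackIdx k a
  refl _ := Or.inl rfl
  trans := by
    rintro a b c (rfl | h1) h2
    · exact h2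
    · rcases h2 with rfl | h2
      · exact Or.inr h1
      · exact Or.inr (h2.trans h1)
  antisymm := by
    rintro a b (rfl | h1) h2
    · rfl
    · rcases h2 with rfl | h2
      · rfl
      · omega
  root := none
  rooted := by
    rintro (_ | ⟨j, s⟩)
    · exact Or.inl rfl
    · exact Or.inr j.isLt
  col a := {i : Fin n | (i : ℕ) < stackColSize n k r a}
  mono := by
    rintro a b (rfl | h) i hi
    · exact hi
    · exact lt_of_lt_of_le hi (stackColSize_le n k r hr h)

/-- The model `M_n^k` (root color `1^{n-k-1}0^{k+1}`). -/
def Mmodel (n k : ℕ) : Model n := stackModel n k (n - (k + 1)) le_rfl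

/-- The model `N_n^k` (root color `1^{n-k-2}0^{k+2}`). -/
def Nmodel (n k : ℕ) : Model n := stackModel n k (n - (k + 2)) (by omega)

/-! ## The frames `S_n` -/

/-- Height index in `S_n`: the top point (`some none`) has index `0`, the two
points of the `j`-th middle layer have index `j+1`, and the root (`none`) has
index `n`. -/
def sIdx (n : ℕ) : Option (Option (Fin (n - 1) × Bool)) → ℕ
  | none => n
  | some none => 0
  | some (some (j, _)) => (j : ℕ) + 1

/-- The frame `S_n` (for `n ≥ 2`): the Boolean sum whose layers from top to
bottom have sizes `1, 2, …, 2, 1` (with `n - 1` layers of size `2`). -/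
def SFrame (n : ℕ) : Frame where
  W := Option (Option (Fin (n - 1) × Bool))
  le a b := a = b ∨ sIdx n b < sIdx n a
  refl _ := Or.inl rfl
  trans := by
    rintro a b c (rfl | h1) h2
    · exact h2
    · rcases h2 with rfl | h2
      · exact Or.inr h1
      · exact Or.inr (h2.trans h1)
  antisymm := by
    rintro a b (rfl | h1) h2
    · rfl
    · rcases h2 with rfl | h2
      · rfl
      · omega

/-!
Since `Box ⊊ L'`, some `φ ∈ L'` lies outside `Box`. Extend `Box` to a prime theory omitting `φ`;
in its Lindenbaum algebra, the elements that are sup-prime relative to the finitely many meets of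
subformulas of `φ` form, ordered reversely, a finite rooted poset `B` refuting `φ` (truth lemma).
The Box axioms, evaluated in the algebra, make `B` layered (points of different depth are
comparable), of width at most two, with a single maximal point.

Every finite rooted frame of `L'` validates the weak Peirce law and is therefore layered too. If it
had a stack of `depth B` layers, the upset of a point in the deepest layer of the stack would map
p-morphically onto `B`, layer by layer, so it would refute `φ`.
-/

namespace IPC

theorem imp_self (φ : Form) : IPC (φ.imp φ) :=
  ((ax2 φ (φ.imp φ) φ).mp _ _ (ax1 φ (φ.imp φ))).mp _ _ (ax1 φ φ)

theorem imp_imp_of_imp (φ : Form) {ψ χ : Form} (h : IPC (ψ.imp χ)) :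
    IPC ((φ.imp ψ).imp (φ.imp χ)) :=
  (ax2 φ ψ χ).mp _ _ ((ax1 (ψ.imp χ) φ).mp _ _ h)

theorem imp_trans {φ ψ χ : Form} (h₁ : IPC (φ.imp ψ)) (h₂ : IPC (ψ.imp χ)) :
    IPC (φ.imp χ) :=
  (imp_imp_of_imp φ h₂).mp _ _ h₁

/-- Derivability from the hypotheses `[γ₁, …, γₙ]`, encoded as the theorem `γ₁ → ⋯ → γₙ → ψ`. -/
def Derives (Γ : List Form) (ψ : Form) : Prop := IPC (Γ.foldr .imp ψ)

theorem Derives.of_ipc {Γ : List Form} {ψ : Form} (h : IPC ψ) : Derives Γ ψ := by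
  induction Γ with
  | nil => exact h
  | cons a Γ ih => exact (ax1 _ a).mp _ _ ih

theorem foldr_imp_distrib (Γ : List Form) (ψ χ : Form) :
    IPC ((Γ.foldr .imp (ψ.imp χ)).imp ((Γ.foldr .imp ψ).imp (Γ.foldr .imp χ))) := by
  induction Γ with
  | nil => exact imp_self _
  | cons a Γ ih => exact imp_trans (imp_imp_of_imp a ih) (ax2 a _ _)

theorem Derives.mp {Γ : List Form} {ψ χ : Form} (h₁ : Derives Γ (ψ.imp χ))
    (h₂ : Derives Γ ψ) : Derives Γ χ :=
  ((foldr_imp_distrib Γ ψ χ).mp _ _ h₁).mp _ _ h₂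

theorem imp_foldr (Γ : List Form) (ψ : Form) : IPC (ψ.imp (Γ.foldr .imp ψ)) := by
  induction Γ with
  | nil => exact imp_self ψ
  | cons a Γ ih => exact imp_trans ih (ax1 _ a)

theorem Derives.mem {Γ : List Form} (ψ : Form) (h : ψ ∈ Γ := by simp) : Derives Γ ψ := by
  induction Γ with
  | nil => cases h
  | cons a Γ ih =>
    rcases List.mem_cons.1 h with rfl | h
    · exact imp_foldr Γ ψ
    · exact (ax1 _ a).mp _ _ (ih h)

theorem imp_trans_imp (a b c : Form) : IPC ((a.imp b).imp ((b.imp c).imp (a.imp c))) :=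
  show Derives [a.imp b, b.imp c, a] c from
    (Derives.mem (b.imp c)).mp ((Derives.mem (a.imp b)).mp (Derives.mem a))

theorem imp_and_of_imp (a b c : Form) :
    IPC ((c.imp a).imp ((c.imp b).imp (c.imp (a.and b)))) :=
  show Derives [c.imp a, c.imp b, c] (a.and b) from
    ((Derives.of_ipc (andI a b)).mp ((Derives.mem (c.imp a)).mp (Derives.mem c))).mp
      ((Derives.mem (c.imp b)).mp (Derives.mem c))

theorem curry (a b c : Form) : IPC (((c.and a).imp b).imp (c.imp (a.imp b))) :=
  show Derives [(c.and a).imp b, c, a] b from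
    (Derives.mem ((c.and a).imp b)).mp
      (((Derives.of_ipc (andI c a)).mp (Derives.mem c)).mp (Derives.mem a))

theorem uncurry (a b c : Form) : IPC ((c.imp (a.imp b)).imp ((c.and a).imp b)) :=
  show Derives [c.imp (a.imp b), c.and a] b from
    ((Derives.mem (c.imp (a.imp b))).mp
      ((Derives.of_ipc (andE1 c a)).mp (Derives.mem (c.and a)))).mp
      ((Derives.of_ipc (andE2 c a)).mp (Derives.mem (c.and a)))

end IPC

structure Theory where
  carrier : Set Form
  ipc_mem : ∀ {φ}, IPC φ → φ ∈ carrier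
  mp_mem : ∀ {φ ψ}, φ.imp ψ ∈ carrier → φ ∈ carrier → ψ ∈ carrier

namespace Theory

instance : SetLike Theory Form where
  coe := carrier
  coe_injective T T' h := by cases T; cases T'; congr

variable (T : Theory) {a b c : Form}

theorem mem_of_imp {φ ψ : Form} (h : IPC (φ.imp ψ)) (hφ : φ ∈ T) : ψ ∈ T :=
  T.mp_mem (T.ipc_mem h) hφ

theorem imp_trans (h₁ : a.imp b ∈ T) (h₂ : b.imp c ∈ T) : a.imp c ∈ T :=
  T.mp_mem (T.mem_of_imp (IPC.imp_trans_imp a b c) h₁) h₂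

theorem imp_and_iff : c.imp (a.and b) ∈ T ↔ c.imp a ∈ T ∧ c.imp b ∈ T :=
  ⟨fun h => ⟨T.imp_trans h (T.ipc_mem (.andE1 a b)), T.imp_trans h (T.ipc_mem (.andE2 a b))⟩,
    fun ⟨h₁, h₂⟩ => T.mp_mem (T.mem_of_imp (IPC.imp_and_of_imp a b c) h₁) h₂⟩

theorem or_imp_iff : (a.or b).imp c ∈ T ↔ a.imp c ∈ T ∧ b.imp c ∈ T :=
  ⟨fun h => ⟨T.imp_trans (T.ipc_mem (.orI1 a b)) h, T.imp_trans (T.ipc_mem (.orI2 a b)) h⟩,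
    fun ⟨h₁, h₂⟩ => T.mp_mem (T.mem_of_imp (.orE a b c) h₁) h₂⟩

theorem and_imp_iff : (c.and a).imp b ∈ T ↔ c.imp (a.imp b) ∈ T :=
  ⟨T.mem_of_imp (IPC.curry a b c), T.mem_of_imp (IPC.uncurry a b c)⟩

theorem top_imp_iff : Form.top.imp a ∈ T ↔ a ∈ T :=
  ⟨fun h => T.mp_mem h (T.ipc_mem .topI), T.mem_of_imp (.ax1 a .top)⟩

theorem and_imp_and {a' b' : Form} (ha : a.imp a' ∈ T) (hb : b.imp b' ∈ T) :
    (a.and b).imp (a'.and b') ∈ T :=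
  (T.imp_and_iff).2
    ⟨T.imp_trans (T.ipc_mem (.andE1 a b)) ha, T.imp_trans (T.ipc_mem (.andE2 a b)) hb⟩

theorem or_imp_or {a' b' : Form} (ha : a.imp a' ∈ T) (hb : b.imp b' ∈ T) :
    (a.or b).imp (a'.or b') ∈ T :=
  (T.or_imp_iff).2
    ⟨T.imp_trans ha (T.ipc_mem (.orI1 a' b')), T.imp_trans hb (T.ipc_mem (.orI2 a' b'))⟩

theorem imp_imp_imp {a' b' : Form} (ha : a'.imp a ∈ T) (hb : b.imp b' ∈ T) :
    (a.imp b).imp (a'.imp b') ∈ T :=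
  (T.and_imp_iff).1 <| T.imp_trans (T.and_imp_and (T.ipc_mem (IPC.imp_self _)) ha) <|
    T.imp_trans ((T.and_imp_iff).2 (T.ipc_mem (IPC.imp_self _))) hb

def setoid : Setoid Form where
  r a b := a.imp b ∈ T ∧ b.imp a ∈ T
  iseqv :=
    { refl a := ⟨T.ipc_mem (IPC.imp_self a), T.ipc_mem (IPC.imp_self a)⟩
      symm h := ⟨h.2, h.1⟩
      trans h₁ h₂ := ⟨T.imp_trans h₁.1 h₂.1, T.imp_trans h₂.2 h₁.2⟩ }

end Theory

def Lindenbaum (T : Theory) : Type := Quotient T.setoid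

namespace Lindenbaum

variable {T : Theory}

def mk (T : Theory) (φ : Form) : Lindenbaum T := Quotient.mk T.setoid φ

@[elab_as_elim]
theorem ind {motive : Lindenbaum T → Prop} (h : ∀ φ, motive (mk T φ)) (x : Lindenbaum T) :
    motive x :=
  Quotient.ind h x

instance : LE (Lindenbaum T) :=
  ⟨Quotient.lift₂ (fun a b => a.imp b ∈ T) fun _ _ _ _ ha hb =>
    propext ⟨fun h => T.imp_trans ha.2 (T.imp_trans h hb.1),
      fun h => T.imp_trans ha.1 (T.imp_trans h hb.2)⟩⟩

theorem mk_le_mk {a b : Form} : mk T a ≤ mk T b ↔ a.imp b ∈ T := Iff.rfl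

instance : PartialOrder (Lindenbaum T) where
  le_refl := ind fun a => T.ipc_mem (IPC.imp_self a)
  le_trans := by
    refine ind fun a => ind fun b => ind fun c => ?_
    exact T.imp_trans
  le_antisymm := by
    refine ind fun a => ind fun b => ?_
    exact fun h₁ h₂ => Quotient.sound ⟨h₁, h₂⟩

instance : Lattice (Lindenbaum T) where
  inf := Quotient.map₂ Form.and fun _ _ ha _ _ hb =>
    ⟨T.and_imp_and ha.1 hb.1, T.and_imp_and ha.2 hb.2⟩
  sup := Quotient.map₂ Form.or fun _ _ ha _ _ hb =>
    ⟨T.or_imp_or ha.1 hb.1, T.or_imp_or ha.2 hb.2⟩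
  inf_le_left := ind fun a => ind fun b => T.ipc_mem (.andE1 a b)
  inf_le_right := ind fun a => ind fun b => T.ipc_mem (.andE2 a b)
  le_inf := ind fun _ => ind fun _ => ind fun _ h₁ h₂ => (T.imp_and_iff).2 ⟨h₁, h₂⟩
  le_sup_left := ind fun a => ind fun b => T.ipc_mem (.orI1 a b)
  le_sup_right := ind fun a => ind fun b => T.ipc_mem (.orI2 a b)
  sup_le := ind fun _ => ind fun _ => ind fun _ h₁ h₂ => (T.or_imp_iff).2 ⟨h₁, h₂⟩

protected def imp : Lindenbaum T → Lindenbaum T → Lindenbaum T :=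
  Quotient.map₂ Form.imp fun _ _ ha _ _ hb =>
    ⟨T.imp_imp_imp ha.2 hb.1, T.imp_imp_imp ha.1 hb.2⟩

instance : BoundedOrder (Lindenbaum T) where
  top := mk T .top
  le_top := ind fun a => T.mem_of_imp (.ax1 _ a) (T.ipc_mem .topI)
  bot := mk T .bot
  bot_le := ind fun a => T.ipc_mem (.botE a)

theorem mk_and (a b : Form) : mk T (a.and b) = mk T a ⊓ mk T b := rfl
theorem mk_or (a b : Form) : mk T (a.or b) = mk T a ⊔ mk T b := rfl
theorem mk_top : mk T .top = ⊤ := rfl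
theorem mk_bot : mk T .bot = ⊥ := rfl

theorem le_imp_iff (x y z : Lindenbaum T) : x ≤ Lindenbaum.imp y z ↔ x ⊓ y ≤ z := by
  induction x using ind; induction y using ind; induction z using ind
  exact (T.and_imp_iff).symm

instance : DistribLattice (Lindenbaum T) :=
  DistribLattice.ofInfSupLe fun a b c => by
    rw [inf_comm, ← le_imp_iff]
    refine sup_le ?_ ?_ <;> rw [le_imp_iff, inf_comm]
    exacts [le_sup_left, le_sup_right]

instance : HeytingAlgebra (Lindenbaum T) :=
  HeytingAlgebra.ofHImp Lindenbaum.imp le_imp_iff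

theorem mk_imp (a b : Form) : mk T (a.imp b) = mk T a ⇨ mk T b := rfl

theorem mk_eq_top {φ : Form} : mk T φ = ⊤ ↔ φ ∈ T := by
  rw [← top_le_iff, ← mk_top, mk_le_mk, T.top_imp_iff]

end Lindenbaum

namespace Form

def eval {H : Type*} [HeytingAlgebra H] (v : ℕ → H) : Form → H
  | var p => v p
  | bot => ⊥
  | top => ⊤
  | and a b => a.eval v ⊓ b.eval v
  | or a b => a.eval v ⊔ b.eval v
  | imp a b => a.eval v ⇨ b.eval v

theorem eval_subst {H : Type*} [HeytingAlgebra H] (v : ℕ → H) (σ : ℕ → Form) (φ : Form) :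
    (φ.subst σ).eval v = φ.eval fun p => (σ p).eval v := by
  induction φ <;> simp only [subst, eval, *]

def subformulas : Form → Finset Form
  | var p => {var p}
  | bot => {bot}
  | top => {top}
  | and a b => insert (and a b) (a.subformulas ∪ b.subformulas)
  | or a b => insert (or a b) (a.subformulas ∪ b.subformulas)
  | imp a b => insert (imp a b) (a.subformulas ∪ b.subformulas)

theorem mem_subformulas_self (φ : Form) : φ ∈ φ.subformulas := by
  cases φ <;> simp [subformulas]

end Form

def IsSILogic.toTheory {L : Set Form} (hL : IsSILogic L) : Theory :=
  ⟨L, fun h => hL.1 h, fun h₁ h₂ => hL.2.1 _ _ h₁ h₂⟩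

namespace Lindenbaum

variable {T : Theory}

theorem eval_mk (φ : Form) : φ.eval (fun p => mk T (.var p)) = mk T φ := by
  induction φ <;> simp only [Form.eval, mk_and, mk_or, mk_imp, mk_top, mk_bot, *]

theorem eval_eq_top {L : Set Form} (hL : IsSILogic L) (hLT : L ⊆ T) {φ : Form} (hφ : φ ∈ L)
    (v : ℕ → Lindenbaum T) : φ.eval v = ⊤ := by
  set σ : ℕ → Form := fun p => Quotient.out (v p)
  have hσ : v = fun p => (σ p).eval fun q => mk T (.var q) := by
    funext p
    rw [eval_mk]
    exact (Quotient.out_eq (v p)).symm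
  rw [hσ, ← Form.eval_subst, eval_mk, mk_eq_top]
  exact hLT (hL.2.2 φ σ hφ)

theorem supPrime_top {φ : Form} (hφ : φ ∉ T) (hor : ∀ a b, a.or b ∈ T → a ∈ T ∨ b ∈ T) :
    SupPrime (⊤ : Lindenbaum T) := by
  refine ⟨fun h => hφ ?_, ind fun a => ind fun b h => ?_⟩
  · have hbot : Form.bot ∈ T := mk_eq_top.1 (isMin_iff_eq_bot.1 h).symm
    exact T.mem_of_imp (.botE φ) hbot
  · simpa only [top_le_iff, ← mk_or, mk_eq_top] using hor a b (mk_eq_top.1 (top_le_iff.1 h))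

end Lindenbaum

open Order in
/-- The prime theory is obtained from a prime ideal of the Lindenbaum algebra separating `φ`
from `⊤`. -/
theorem Theory.exists_prime_extension (T : Theory) {φ : Form} (hφ : φ ∉ T) :
    ∃ T' : Theory, (T : Set Form) ⊆ T' ∧ φ ∉ T' ∧
      ∀ a b, a.or b ∈ T' → a ∈ T' ∨ b ∈ T' := by
  have hdisj : Disjoint (PFilter.principal (⊤ : Lindenbaum T) : Set (Lindenbaum T))
      (Ideal.principal (Lindenbaum.mk T φ)) :=
    Set.disjoint_left.2 fun x hx hx' =>
      hφ (Lindenbaum.mk_eq_top.1 (top_le_iff.1 ((PFilter.mem_principal.1 hx).trans hx')))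
  obtain ⟨J, hJ, hφJ, hJtop⟩ := DistribLattice.prime_ideal_of_disjoint_filter_ideal hdisj
  have htop : (⊤ : Lindenbaum T) ∉ J := Set.disjoint_left.1 hJtop (PFilter.mem_principal.2 le_rfl)
  refine ⟨⟨{ψ | Lindenbaum.mk T ψ ∉ J}, fun h => ?_, fun {a b} hab ha hb => ?_⟩,
    fun ψ hψ => ?_, fun h => h (hφJ (Ideal.mem_principal.2 le_rfl)), fun a b hab => ?_⟩
  · show Lindenbaum.mk T _ ∉ J
    rwa [Lindenbaum.mk_eq_top.2 (T.ipc_mem h)]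
  · have : Lindenbaum.mk T a ⊓ (Lindenbaum.mk T a ⇨ Lindenbaum.mk T b) ∈ J :=
      J.lower inf_himp_le hb
    rcases hJ.mem_or_mem this with h | h
    exacts [ha h, hab h]
  · show Lindenbaum.mk T ψ ∉ J
    rwa [Lindenbaum.mk_eq_top.2 hψ]
  · by_contra! h
    exact hab (Ideal.sup_mem (not_not.1 h.1) (not_not.1 h.2) :
      Lindenbaum.mk T a ⊔ Lindenbaum.mk T b ∈ J)

namespace Frame

def WidthLeTwo (F : Frame) : Prop :=
  ∀ x y z : F.W, F.le x y ∨ F.le y x ∨ F.le x z ∨ F.le z x ∨ F.le y z ∨ F.le z y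

def IsMaximal (F : Frame) (x : F.W) : Prop := ∀ v, F.le x v → v = x

variable (F : Frame)

theorem lt_of_lt_of_le {a b c : F.W} (h₁ : F.lt a b) (h₂ : F.le b c) : F.lt a c :=
  ⟨F.trans _ _ _ h₁.1 h₂, fun hac => h₁.2 (F.antisymm _ _ h₁.1 (hac ▸ h₂))⟩

variable {F}

theorem hasChainUp_one (w : F.W) : F.hasChainUp w 1 :=
  ⟨fun _ => w, fun _ _ => rfl, fun i j hij => by omega⟩

theorem hasChainUp.mono {w : F.W} {d d' : ℕ} (h : F.hasChainUp w d) (hd : d' ≤ d) :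
    F.hasChainUp w d' := by
  obtain ⟨f, hf₀, hf⟩ := h
  exact ⟨fun i => f (Fin.castLE hd i), fun i hi => hf₀ _ hi, fun i j hij => hf _ _ hij⟩

theorem hasChainUp.le_card [Finite F.W] {w : F.W} {d : ℕ} (h : F.hasChainUp w d) :
    d ≤ Nat.card F.W := by
  obtain ⟨f, -, hf⟩ := h
  have hinj : Function.Injective f := fun i j hij => by
    by_contra hne
    rcases lt_or_gt_of_ne (Fin.val_ne_of_ne hne) with h | h
    exacts [(hf i j h).2 hij, (hf j i h).2 hij.symm]
  simpa using Nat.card_le_card_of_injective f hinj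

theorem hasChainUp_succ_of_lt {a b : F.W} {d : ℕ} (hab : F.lt a b) (h : F.hasChainUp b d) :
    F.hasChainUp a (d + 1) := by
  obtain ⟨f, hf₀, hf⟩ := h
  have hbf : ∀ i, F.le b (f i) := fun i => by
    by_cases hi : (i : ℕ) = 0
    · rw [hf₀ i hi]; exact F.refl b
    · rw [← hf₀ ⟨0, by omega⟩ rfl]; exact (hf _ _ (Nat.pos_of_ne_zero hi)).1
  refine ⟨Fin.cons a f, fun i hi => by rw [Fin.ext (a := i) (b := 0) hi, Fin.cons_zero],
    fun i j hij => ?_⟩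
  induction j using Fin.cases with
  | zero => exact absurd hij (Nat.not_lt_zero _)
  | succ j =>
    induction i using Fin.cases with
    | zero => exact F.lt_of_lt_of_le hab (hbf j)
    | succ i => exact hf i j (by simpa using hij)

theorem exists_lt_hasChainUp {w : F.W} {d : ℕ} (h : F.hasChainUp w (d + 2)) :
    ∃ v, F.lt w v ∧ F.hasChainUp v (d + 1) := by
  obtain ⟨f, hf₀, hf⟩ := h
  refine ⟨f 1, hf₀ 0 rfl ▸ hf 0 1 (by simp), fun i => f i.succ, fun i hi => ?_,
    fun i j hij => hf _ _ (by simpa using hij)⟩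
  rw [Fin.ext (a := i) (b := 0) hi]
  rfl

variable [Finite F.W]

variable (F) in
open Classical in
noncomputable def dep (w : F.W) : ℕ := Nat.findGreatest (F.hasChainUp w) (Nat.card F.W)

theorem hasChainUp_dep (w : F.W) : F.hasChainUp w (F.dep w) := by
  classical
  exact Nat.findGreatest_spec (hasChainUp_one w).le_card (hasChainUp_one w)

theorem le_dep {w : F.W} {d : ℕ} (h : F.hasChainUp w d) : d ≤ F.dep w := by
  classical
  exact Nat.le_findGreatest h.le_card h

theorem one_le_dep (w : F.W) : 1 ≤ F.dep w := le_dep (hasChainUp_one w)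

theorem depthEq_iff {w : F.W} {d : ℕ} : F.depthEq w d ↔ d = F.dep w := by
  refine ⟨fun h => (le_dep h.1).antisymm ?_, ?_⟩
  · by_contra! hd
    exact h.2 ((hasChainUp_dep w).mono hd)
  · rintro rfl
    exact ⟨hasChainUp_dep w, fun h => by have := le_dep h; omega⟩

theorem dep_lt_of_lt {a b : F.W} (h : F.lt a b) : F.dep b < F.dep a :=
  le_dep (hasChainUp_succ_of_lt h (hasChainUp_dep b))

theorem dep_le_of_le {a b : F.W} (h : F.le a b) : F.dep b ≤ F.dep a := by
  by_cases hab : a = b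
  · rw [hab]
  · exact (dep_lt_of_lt ⟨h, hab⟩).le

theorem eq_of_le_of_dep_le {a b : F.W} (h : F.le a b) (hd : F.dep a ≤ F.dep b) : a = b := by
  by_contra hab
  exact absurd hd (not_le.2 (dep_lt_of_lt ⟨h, hab⟩))

theorem exists_lt_dep_add_one_eq {w : F.W} (h : 2 ≤ F.dep w) :
    ∃ v, F.lt w v ∧ F.dep v + 1 = F.dep w := by
  obtain ⟨d, hd⟩ := Nat.exists_eq_add_of_le' h
  obtain ⟨v, hwv, hv⟩ := exists_lt_hasChainUp (hd ▸ hasChainUp_dep w)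
  have := le_dep hv
  have := dep_lt_of_lt hwv
  exact ⟨v, hwv, by omega⟩

theorem exists_le_dep_eq {w : F.W} {j : ℕ} (hj : 1 ≤ j) (hjw : j ≤ F.dep w) :
    ∃ v, F.le w v ∧ F.dep v = j := by
  induction h : F.dep w - j generalizing w with
  | zero => exact ⟨w, F.refl w, by omega⟩
  | succ n ih =>
    obtain ⟨v, hwv, hv⟩ := exists_lt_dep_add_one_eq (w := w) (by omega)
    obtain ⟨u, hvu, hu⟩ := ih (w := v) (by omega) (by omega)
    exact ⟨u, F.trans _ _ _ hwv.1 hvu, hu⟩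

variable (F) in
def IsLayered : Prop := ∀ a b, F.dep b < F.dep a → F.le a b

theorem IsLayered.le_iff (hF : F.IsLayered) {a b : F.W} :
    F.le a b ↔ a = b ∨ F.dep b < F.dep a := by
  refine ⟨fun h => ?_, fun h => h.elim (fun h => h ▸ F.refl a) (hF a b)⟩
  by_cases hab : a = b
  exacts [Or.inl hab, Or.inr (dep_lt_of_lt ⟨h, hab⟩)]

theorem isMaximal_of_dep_eq_one {x : F.W} (hx : F.dep x = 1) : F.IsMaximal x :=
  fun v hxv => (eq_of_le_of_dep_le hxv (hx ▸ one_le_dep v)).symm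

theorem exists_dep_eq_iff_eq_or_eq (hw : F.WidthLeTwo) {r : F.W} {e : ℕ}
    (he₁ : 1 ≤ e) (he : e ≤ F.dep r) : ∃ p q, ∀ y, F.dep y = e ↔ y = p ∨ y = q := by
  obtain ⟨p, -, hp⟩ := exists_le_dep_eq he₁ he
  by_cases hq : ∃ q, F.dep q = e ∧ q ≠ p
  · obtain ⟨q, hq, hqp⟩ := hq
    refine ⟨p, q, fun y => ⟨fun hy => ?_, by rintro (rfl | rfl) <;> assumption⟩⟩
    have eq_of_le : ∀ {a b}, F.dep a = e → F.dep b = e → F.le a b → a = b :=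
      fun ha hb hab => eq_of_le_of_dep_le hab (ha.trans hb.symm).le
    rcases hw y p q with h | h | h | h | h | h
    · exact Or.inl (eq_of_le hy hp h)
    · exact Or.inl (eq_of_le hp hy h).symm
    · exact Or.inr (eq_of_le hy hq h)
    · exact Or.inr (eq_of_le hq hy h).symm
    · exact absurd (eq_of_le hp hq h).symm hqp
    · exact absurd (eq_of_le hq hp h) hqp
  · exact ⟨p, p, fun y => ⟨fun hy => Or.inl (by_contra fun hyp => hq ⟨y, hy, hyp⟩),
      by rintro (rfl | rfl) <;> exact hp⟩⟩

end Frame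

section SupPrimeIn

variable {α : Type*} [DistribLattice α] [OrderBot α]

def IsSupPrimeIn (A : Finset α) (x : α) : Prop :=
  x ≠ ⊥ ∧ ∀ s ⊆ A, x ≤ s.sup id → ∃ y ∈ s, x ≤ y

variable {A : Finset α} {x : α}

theorem IsSupPrimeIn.exists_le_of_le_sup {ι : Type*} {s : Finset ι} {f : ι → α}
    (hx : IsSupPrimeIn A x) (hf : ∀ i ∈ s, f i ∈ A) (h : x ≤ s.sup f) : ∃ i ∈ s, x ≤ f i := by
  classical
  obtain ⟨y, hy, hxy⟩ := hx.2 (s.image f) (Finset.image_subset_iff.2 hf)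
    (by rwa [Finset.sup_image, Function.id_comp])
  obtain ⟨i, hi, rfl⟩ := Finset.mem_image.1 hy
  exact ⟨i, hi, hxy⟩

theorem IsSupPrimeIn.le_or_le (hx : IsSupPrimeIn A x) {a b : α} (ha : a ∈ A) (hb : b ∈ A)
    (h : x ≤ a ⊔ b) : x ≤ a ∨ x ≤ b := by
  obtain ⟨i, -, hi⟩ := hx.exists_le_of_le_sup (s := Finset.univ) (f := fun i : Bool => cond i a b)
    (by simp [ha, hb]) (by simpa [sup_comm] using h)
  cases i
  exacts [Or.inr hi, Or.inl hi]

/-- Every member of a finite `⊓`-closed set is the join of the relative sup-primes below it. -/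
theorem le_of_forall_isSupPrimeIn_le (hA : ∀ x ∈ A, ∀ y ∈ A, x ⊓ y ∈ A) {c d : α} (hc : c ∈ A)
    (h : ∀ x ∈ A, IsSupPrimeIn A x → x ≤ c → x ≤ d) : c ≤ d := by
  revert h
  refine (A.finite_toSet.wellFoundedOn (r := (· < ·))).induction hc
    (P := fun c => (∀ x ∈ A, IsSupPrimeIn A x → x ≤ c → x ≤ d) → c ≤ d) fun c hc ih h => ?_
  by_cases hprime : IsSupPrimeIn A c
  · exact h c hc hprime le_rfl
  rcases eq_or_ne c ⊥ with rfl | hne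
  · exact bot_le
  obtain ⟨s, hsA, hcs, hs⟩ : ∃ s ⊆ A, c ≤ s.sup id ∧ ∀ y ∈ s, ¬c ≤ y := by
    simpa [IsSupPrimeIn, hne] using hprime
  calc c = c ⊓ s.sup id := (inf_eq_left.2 hcs).symm
    _ = s.sup (c ⊓ ·) := Finset.sup_inf_distrib_left _ _ _
    _ ≤ d := Finset.sup_le fun y hy =>
      ih _ (hA c hc y (hsA hy)) (inf_le_left.lt_of_ne fun heq => hs y hy (inf_eq_left.1 heq))
        fun x hx hxp hxc => h x hx hxp (hxc.trans inf_le_left)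

end SupPrimeIn

section SupPrimeFrame

variable {α : Type} [DistribLattice α] [OrderBot α]

abbrev supPrimeFrame (A : Finset α) : Frame where
  W := {x : α // x ∈ A ∧ IsSupPrimeIn A x}
  le x y := y.1 ≤ x.1
  refl _ := le_rfl
  trans _ _ _ h₁ h₂ := h₂.trans h₁
  antisymm _ _ h₁ h₂ := Subtype.ext (le_antisymm h₂ h₁)

instance (A : Finset α) : Finite (supPrimeFrame A).W :=
  Finite.of_injective (fun x => (⟨x.1, x.2.1⟩ : A)) fun _ _ h =>
    Subtype.ext (congrArg Subtype.val h :)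

variable {A : Finset α}

theorem supPrimeFrame.le_sup_iff {ι : Type*} {s : Finset ι} {f : ι → (supPrimeFrame A).W}
    (w : (supPrimeFrame A).W) :
    w.1 ≤ s.sup (fun i => (f i).1) ↔ ∃ i ∈ s, (supPrimeFrame A).le (f i) w :=
  ⟨w.2.2.exists_le_of_le_sup fun i _ => (f i).2.1,
    fun ⟨_, hi, h⟩ => h.trans (Finset.le_sup (f := fun i => (f i).1) hi)⟩

theorem supPrimeFrame_widthLeTwo (hbw : ∀ a b c : α, a ≤ b ⊔ c ∨ b ≤ a ⊔ c ∨ c ≤ a ⊔ b) :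
    (supPrimeFrame A).WidthLeTwo := by
  intro x y z
  rcases hbw x.1 y.1 z.1 with h | h | h
  · rcases x.2.2.le_or_le y.2.1 z.2.1 h with h | h <;> simp only [h, true_or, or_true]
  · rcases y.2.2.le_or_le x.2.1 z.2.1 h with h | h <;> simp only [h, true_or, or_true]
  · rcases z.2.2.le_or_le x.2.1 y.2.1 h with h | h <;> simp only [h, true_or, or_true]

end SupPrimeFrame

section Canonical

variable {H : Type} [HeytingAlgebra H]

open Classical in
noncomputable def evalInfs (v : ℕ → H) (S : Finset Form) : Finset H :=
  S.powerset.image fun w => w.inf (Form.eval v)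

variable {v : ℕ → H} {S : Finset Form}

theorem mem_evalInfs {x : H} : x ∈ evalInfs v S ↔ ∃ w ⊆ S, w.inf (Form.eval v) = x := by
  simp [evalInfs]

theorem inf_mem_evalInfs {x y : H} (hx : x ∈ evalInfs v S) (hy : y ∈ evalInfs v S) :
    x ⊓ y ∈ evalInfs v S := by
  classical
  obtain ⟨w, hw, rfl⟩ := mem_evalInfs.1 hx
  obtain ⟨w', hw', rfl⟩ := mem_evalInfs.1 hy
  exact mem_evalInfs.2 ⟨w ∪ w', Finset.union_subset hw hw', Finset.inf_union⟩

theorem top_mem_evalInfs : ⊤ ∈ evalInfs v S :=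
  mem_evalInfs.2 ⟨∅, Finset.empty_subset S, Finset.inf_empty⟩

theorem eval_mem_evalInfs {a : Form} (ha : a ∈ S) : a.eval v ∈ evalInfs v S :=
  mem_evalInfs.2 ⟨{a}, Finset.singleton_subset_iff.2 ha, Finset.inf_singleton⟩

theorem force_supPrimeFrame_iff {ψ : Form} (hψ : ψ.subformulas ⊆ S)
    (x : (supPrimeFrame (evalInfs v S)).W) :
    (supPrimeFrame (evalInfs v S)).force (fun p y => y.1 ≤ v p) ψ x ↔ x.1 ≤ ψ.eval v := by
  induction ψ generalizing x with
  | var p => exact Iff.rfl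
  | bot => exact ⟨False.elim, fun h => x.2.2.1 (le_bot_iff.1 h)⟩
  | top => exact ⟨fun _ => le_top, fun _ => trivial⟩
  | and a b iha ihb =>
    obtain ⟨-, ha, hb⟩ : _ ∧ a.subformulas ⊆ S ∧ b.subformulas ⊆ S := by
      rwa [Form.subformulas, Finset.insert_subset_iff, Finset.union_subset_iff] at hψ
    simp only [Frame.force, Form.eval, iha ha, ihb hb, le_inf_iff]
  | or a b iha ihb =>
    obtain ⟨-, ha, hb⟩ : _ ∧ a.subformulas ⊆ S ∧ b.subformulas ⊆ S := by
      rwa [Form.subformulas, Finset.insert_subset_iff, Finset.union_subset_iff] at hψ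
    simp only [Frame.force, Form.eval, iha ha, ihb hb]
    refine ⟨fun h => h.elim le_sup_of_le_left le_sup_of_le_right, x.2.2.le_or_le ?_ ?_⟩
    exacts [eval_mem_evalInfs (ha a.mem_subformulas_self),
      eval_mem_evalInfs (hb b.mem_subformulas_self)]
  | imp a b iha ihb =>
    obtain ⟨-, ha, hb⟩ : _ ∧ a.subformulas ⊆ S ∧ b.subformulas ⊆ S := by
      rwa [Form.subformulas, Finset.insert_subset_iff, Finset.union_subset_iff] at hψ
    simp only [Frame.force, Form.eval, iha ha, ihb hb]
    refine ⟨fun h => le_himp_iff.2 ?_, fun h y hyx hya => ?_⟩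
    · refine le_of_forall_isSupPrimeIn_le (fun _ hx _ hy => inf_mem_evalInfs hx hy)
        (inf_mem_evalInfs x.2.1 (eval_mem_evalInfs (ha a.mem_subformulas_self)))
        fun y hy hyp hyx => h ⟨y, hy, hyp⟩ (le_inf_iff.1 hyx).1 (le_inf_iff.1 hyx).2
    · exact (le_inf le_rfl hya).trans (le_himp_iff.1 (hyx.trans h))

end Canonical

section SupPrimeFrameHeyting

variable {H : Type} [HeytingAlgebra H] {A : Finset H}

theorem supPrimeFrame_eq_of_isMaximal (hA : ∀ x ∈ A, ∀ y ∈ A, x ⊓ y ∈ A)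
    (hkc : ∀ a : H, a = ⊥ ∨ aᶜ = ⊥) {x y : (supPrimeFrame A).W}
    (hx : (supPrimeFrame A).IsMaximal x) (hy : (supPrimeFrame A).IsMaximal y) : x = y := by
  by_contra hne
  have hxy : x.1 ⊓ y.1 ≤ ⊥ :=
    le_of_forall_isSupPrimeIn_le hA (hA _ x.2.1 _ y.2.1) fun z hz hzp hzxy =>
      absurd ((hx ⟨z, hz, hzp⟩ (le_inf_iff.1 hzxy).1).symm.trans
        (hy ⟨z, hz, hzp⟩ (le_inf_iff.1 hzxy).2)) hne
  rcases hkc x.1 with h | h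
  · exact x.2.2.1 h
  · exact y.2.2.1 (le_bot_iff.1 (h ▸ le_compl_iff_disjoint_left.2 (disjoint_iff_inf_le.2 hxy)))

theorem inf_himp_le_of_width_le_two (hbw : ∀ a b c : H, a ≤ b ⊔ c ∨ b ≤ a ⊔ c ∨ c ≤ a ⊔ b)
    {a b c p : H} (hab : a ⊓ b ≤ p) (hc : c ≤ p) (hcb : ¬c ≤ b) (hb : ¬b ≤ a ⊔ p) :
    a ⊓ (p ⇨ b) ≤ p := by
  set t := a ⊓ (p ⇨ b)
  rcases hbw t p b with h | h | h
  · calc t = t ⊓ p ⊔ t ⊓ b := by rw [← inf_sup_left, inf_eq_left.2 h]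
      _ ≤ p := sup_le inf_le_right ((inf_le_inf_right _ inf_le_left).trans hab)
  · refine absurd ?_ hcb
    calc c = c ⊓ t ⊔ c ⊓ b := by rw [← inf_sup_left, inf_eq_left.2 (hc.trans h)]
      _ ≤ b := sup_le ((inf_le_inf hc inf_le_right).trans inf_himp_le) inf_le_right
  · exact absurd (h.trans (sup_le_sup_right inf_le_left _)) hb

theorem supPrimeFrame_isLayered (hA : ∀ x ∈ A, ∀ y ∈ A, x ⊓ y ∈ A)
    (hwpl : ∀ p q : H, q ≤ p ∨ (p ⇨ q) ⇨ p ≤ p)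
    (hbw : ∀ a b c : H, a ≤ b ⊔ c ∨ b ≤ a ⊔ c ∨ c ≤ a ⊔ b) :
    (supPrimeFrame A).IsLayered := by
  classical
  set F := supPrimeFrame A
  have := Fintype.ofFinite F.W
  intro a b hdep
  by_contra hab
  change ¬b.1 ≤ a.1 at hab
  set U := Finset.univ.filter fun v : F.W => F.dep v ≤ F.dep b ∧ v ≠ b
  set p := U.sup Subtype.val
  have hp : ∀ w : F.W, w.1 ≤ p ↔ F.dep w ≤ F.dep b ∧ w ≠ b := fun w => by
    refine (supPrimeFrame.le_sup_iff (f := id) w).trans ⟨fun ⟨v, hv, hvw⟩ => ?_,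
      fun hw => ⟨w, by simpa [U] using hw, F.refl w⟩⟩
    obtain ⟨hvb, hvb'⟩ := (Finset.mem_filter.1 hv).2
    refine ⟨(F.dep_le_of_le hvw).trans hvb, fun hwb => hvb' ?_⟩
    subst hwb
    exact F.eq_of_le_of_dep_le hvw hvb
  have hab_p : a.1 ⊓ b.1 ≤ p :=
    le_of_forall_isSupPrimeIn_le hA (hA _ a.2.1 _ b.2.1) fun x hx hxp hxab => by
      have hbx : F.lt b ⟨x, hx, hxp⟩ :=
        ⟨(le_inf_iff.1 hxab).2, fun h => hab (h ▸ (le_inf_iff.1 hxab).1)⟩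
      exact (hp _).2 ⟨(F.dep_lt_of_lt hbx).le, Ne.symm hbx.2⟩
  obtain ⟨c, hac, hc⟩ := F.exists_le_dep_eq (F.one_le_dep b) hdep.le
  have hcb : c ≠ b := fun h => hab (h ▸ hac)
  have hbap : ¬b.1 ≤ a.1 ⊔ p := fun h => by
    obtain ⟨v, hv, hvb⟩ := (supPrimeFrame.le_sup_iff (f := id) b).1
      (show b.1 ≤ (insert a U).sup Subtype.val by rwa [Finset.sup_insert])
    rcases Finset.mem_insert.1 hv with rfl | hv
    · exact hab hvb
    · exact ((hp b).1 (hvb.trans (Finset.le_sup hv))).2 rfl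
  have ht := inf_himp_le_of_width_le_two hbw hab_p ((hp c).2 ⟨hc.le, hcb⟩)
    (fun h => hcb (F.eq_of_le_of_dep_le (a := b) h hc.ge).symm) hbap
  have hbp : ¬b.1 ≤ p := fun h => ((hp b).1 h).2 rfl
  have hap : a.1 ≤ p := (le_himp_iff.2 ht).trans ((hwpl p b.1).resolve_left hbp)
  exact absurd hdep (not_lt.2 ((hp a).1 hap).1)

end SupPrimeFrameHeyting

theorem isSILogic_oplus (L Γ : Set Form) : IsSILogic (oplus L Γ) :=
  ⟨fun _ hφ _ hM => hM.1.1 hφ, fun φ ψ h₁ h₂ _ hM => hM.1.2.1 φ ψ (h₁ _ hM) (h₂ _ hM),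
    fun φ σ h _ hM => hM.1.2.2 φ σ (h _ hM)⟩

theorem subset_oplus_left (L Γ : Set Form) : L ⊆ oplus L Γ := fun _ hφ _ hM => hM.2.1 hφ

theorem subset_oplus_right (L Γ : Set Form) : Γ ⊆ oplus L Γ := fun _ hφ _ hM => hM.2.2 hφ

theorem wPLax_mem_boxLogic : wPLax ∈ BoxLogic :=
  subset_oplus_left _ _ (subset_oplus_right _ _ rfl)

theorem bw2ax_mem_boxLogic : bw2ax ∈ BoxLogic := subset_oplus_right _ _ (Or.inl rfl)

theorem kcax_mem_boxLogic : kcax ∈ BoxLogic := subset_oplus_right _ _ (Or.inr rfl)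

theorem eq_top_or_eq_top_of_sup_eq_top {α : Type*} [Lattice α] [OrderTop α]
    (htop : SupPrime (⊤ : α)) {x y : α} (h : x ⊔ y = ⊤) : x = ⊤ ∨ y = ⊤ := by
  simpa only [top_le_iff] using htop.le_sup.1 (top_le_iff.2 h)

namespace Lindenbaum

variable {T : Theory} (hBT : BoxLogic ⊆ T) (htop : SupPrime (⊤ : Lindenbaum T))
include hBT htop

theorem le_or_himp_himp_le (p q : Lindenbaum T) : q ≤ p ∨ (p ⇨ q) ⇨ p ≤ p := by
  have h := eval_eq_top (isSILogic_oplus _ _) hBT wPLax_mem_boxLogic fun n => if n = 0 then p else q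
  simp only [wPLax, Form.eval, if_pos, one_ne_zero, if_false] at h
  simpa only [himp_eq_top_iff] using eq_top_or_eq_top_of_sup_eq_top htop h

theorem le_sup_or_le_sup_or_le_sup (a b c : Lindenbaum T) :
    a ≤ b ⊔ c ∨ b ≤ a ⊔ c ∨ c ≤ a ⊔ b := by
  have h := eval_eq_top (isSILogic_oplus _ _) hBT bw2ax_mem_boxLogic
    fun n => if n = 0 then a else if n = 1 then b else c
  simp only [bw2ax, Form.eval, if_pos, one_ne_zero, if_false, OfNat.ofNat_ne_zero,
    OfNat.ofNat_ne_one] at h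
  rcases eq_top_or_eq_top_of_sup_eq_top htop h with h | h
  · exact Or.inl (himp_eq_top_iff.1 h)
  rcases eq_top_or_eq_top_of_sup_eq_top htop h with h | h
  · exact Or.inr (Or.inl (himp_eq_top_iff.1 h))
  · exact Or.inr (Or.inr (himp_eq_top_iff.1 h))

theorem eq_bot_or_compl_eq_bot (a : Lindenbaum T) : a = ⊥ ∨ aᶜ = ⊥ := by
  have h := eval_eq_top (isSILogic_oplus _ _) hBT kcax_mem_boxLogic fun _ => a
  simp only [kcax, Form.neg, Form.eval] at h
  rcases eq_top_or_eq_top_of_sup_eq_top htop h with h | h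
  · exact Or.inl (le_bot_iff.1 (himp_eq_top_iff.1 h))
  · exact Or.inr (by rw [← himp_bot]; exact le_bot_iff.1 (himp_eq_top_iff.1 h))

end Lindenbaum

theorem exists_frame_not_valid_of_not_mem_boxLogic {φ : Form} (hφ : φ ∉ BoxLogic) :
    ∃ B : Frame, ∃ _ : Finite B.W, ∃ r : B.W, (∀ w, B.le r w) ∧ ¬B.Valid φ ∧ B.WidthLeTwo ∧
      (∀ x y, B.IsMaximal x → B.IsMaximal y → x = y) ∧ B.IsLayered := by
  obtain ⟨T, hBT, hφT, hor⟩ :=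
    (isSILogic_oplus wPL {bw2ax, kcax}).toTheory.exists_prime_extension hφ
  have htop : SupPrime (⊤ : Lindenbaum T) := Lindenbaum.supPrime_top hφT hor
  set v : ℕ → Lindenbaum T := fun p => Lindenbaum.mk T (.var p)
  set A := evalInfs v φ.subformulas
  have hA : ∀ x ∈ A, ∀ y ∈ A, x ⊓ y ∈ A := fun _ hx _ hy => inf_mem_evalInfs hx hy
  let r : (supPrimeFrame A).W :=
    ⟨⊤, top_mem_evalInfs, htop.ne_bot, fun s _ h => htop.le_finset_sup.1 h⟩
  refine ⟨supPrimeFrame A, inferInstance, r, fun w => le_top, fun h => hφT ?_,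
    supPrimeFrame_widthLeTwo (Lindenbaum.le_sup_or_le_sup_or_le_sup hBT htop),
    fun _ _ => supPrimeFrame_eq_of_isMaximal hA (Lindenbaum.eq_bot_or_compl_eq_bot hBT htop),
    supPrimeFrame_isLayered hA (Lindenbaum.le_or_himp_himp_le hBT htop)
      (Lindenbaum.le_sup_or_le_sup_or_le_sup hBT htop)⟩
  have hr := (force_supPrimeFrame_iff subset_rfl r).1
    (h (fun p y => y.1 ≤ v p) (fun _ _ _ hab hx => hab.trans hx) r)
  rwa [Lindenbaum.eval_mk, top_le_iff, Lindenbaum.mk_eq_top] at hr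

theorem force_comp_iff_of_isPMorphism {P Q : Frame} {f : P.W → Q.W} (hf : IsPMorphism P Q f)
    (V : ℕ → Q.W → Prop) (ψ : Form) (x : P.W) :
    P.force (fun p w => V p (f w)) ψ x ↔ Q.force V ψ (f x) := by
  induction ψ generalizing x with
  | var | bot | top => exact Iff.rfl
  | and a b iha ihb | or a b iha ihb => simp only [Frame.force, iha, ihb]
  | imp a b iha ihb =>
    simp only [Frame.force]
    refine ⟨fun h y hxy hya => ?_, fun h y hxy hya => ?_⟩
    · obtain ⟨x', hxx', rfl⟩ := hf.2 x y hxy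
      exact (ihb x').1 (h x' hxx' ((iha x').2 hya))
    · exact (ihb y).2 (h (f y) (hf.1 x y hxy) ((iha y).1 hya))

theorem PMorphicImage.of_isPMorphism {P Q : Frame} {f : P.W → Q.W} (hf : IsPMorphism P Q f)
    {x : P.W} (hx : ∀ y, Q.le (f x) y) : PMorphicImage P Q :=
  ⟨f, hf, fun y => let ⟨x', _, hx'⟩ := hf.2 x y (hx y); ⟨x', hx'⟩⟩

namespace Frame.Valid

variable {φ : Form}

theorem of_pMorphicImage {P Q : Frame} (hv : P.Valid φ) (h : PMorphicImage P Q) :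
    Q.Valid φ := by
  obtain ⟨f, hf, hsurj⟩ := h
  intro V hV y
  obtain ⟨x, rfl⟩ := hsurj y
  exact (force_comp_iff_of_isPMorphism hf V φ x).1
    (hv _ (fun p _ _ hab => hV p _ _ (hf.1 _ _ hab)) x)

theorem up {F : Frame} (hv : F.Valid φ) (z : F.W) : (F.up z).Valid φ := by
  intro V hV u
  let V' : ℕ → F.W → Prop := fun p w => ∃ h : F.le z w, V p ⟨w, h⟩
  have hV' : (fun p (w : (F.up z).W) => V' p w.1) = V :=
    funext₂ fun _ w => propext ⟨fun ⟨_, h⟩ => h, fun h => ⟨w.2, h⟩⟩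
  have hincl : IsPMorphism (F.up z) F Subtype.val :=
    ⟨fun _ _ h => h, fun a b hab => ⟨⟨b, F.trans _ _ _ a.2 hab⟩, hab, rfl⟩⟩
  rw [← hV']
  refine (force_comp_iff_of_isPMorphism hincl V' φ u).2 (hv V' ?_ u.1)
  exact fun p a b hab ⟨hza, ha⟩ => ⟨F.trans _ _ _ hza hab, hV p ⟨a, hza⟩ ⟨b, _⟩ hab ha⟩

end Frame.Valid

theorem Frame.isLayered_of_valid_wPLax {F : Frame} [Finite F.W] (hroot : F.Rooted)
    (h : F.Valid wPLax) : F.IsLayered := by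
  intro a b hdep
  by_contra hab
  obtain ⟨r, hr⟩ := hroot
  set k := F.dep b
  -- `p` holds at the points of depth at most `k` other than `b`, `q` above `b`: then `q → p`
  -- fails at `b`, and `((p → q) → p) → p` at `a`
  set V : ℕ → F.W → Prop := fun n w => (n = 0 ∧ F.dep w ≤ k ∧ w ≠ b) ∨ (n = 1 ∧ F.le b w)
  have hV : F.Persistent V := by
    rintro n u w huw (⟨rfl, hu, hub⟩ | ⟨rfl, hbu⟩)
    · refine Or.inl ⟨rfl, (dep_le_of_le huw).trans hu, fun hwb => hub ?_⟩
      subst hwb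
      exact eq_of_le_of_dep_le huw hu
    · exact Or.inr ⟨rfl, F.trans _ _ _ hbu huw⟩
  rcases h V hV r with hqp | hpeirce
  · rcases hqp b (hr b) (Or.inr ⟨rfl, F.refl b⟩) with ⟨-, -, hbb⟩ | ⟨h, -⟩
    exacts [hbb rfl, absurd h zero_ne_one]
  refine absurd (hpeirce a (hr a) fun u hau hpq => ?_) ?_
  · by_contra hu
    have hub : u ≠ b := by rintro rfl; exact hab hau
    have hku : k < F.dep u := by
      by_contra hle
      exact hu (Or.inl ⟨rfl, not_lt.1 hle, hub⟩)
    obtain ⟨c, huc, hc⟩ := exists_le_dep_eq (one_le_dep b) hku.le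
    have hcb : c ≠ b := by rintro rfl; exact hab (F.trans _ _ _ hau huc)
    rcases hpq c huc (Or.inl ⟨rfl, hc.le, hcb⟩) with ⟨h, -⟩ | ⟨-, hbc⟩
    exacts [absurd h one_ne_zero, hcb (eq_of_le_of_dep_le hbc hc.ge).symm]
  · rintro (⟨-, hak, -⟩ | ⟨h, -⟩)
    exacts [absurd hdep (not_lt.2 hak), absurd h zero_ne_one]

theorem isPMorphism_of_rank {P Q : Frame} {f : P.W → Q.W} (rP : P.W → ℕ) (rQ : Q.W → ℕ)
    (hP : ∀ a b, P.le a b ↔ a = b ∨ rP b < rP a) (hQ : ∀ a b, Q.le a b ↔ a = b ∨ rQ b < rQ a)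
    (hmono : ∀ a b, rP b < rP a → f a = f b ∨ rQ (f b) < rQ (f a))
    (hback : ∀ a y, rQ y < rQ (f a) → ∃ a', rP a' < rP a ∧ f a' = y) : IsPMorphism P Q f := by
  refine ⟨fun a b hab => (hQ _ _).2 ?_, fun a y hay => ?_⟩
  · rcases (hP a b).1 hab with rfl | h
    exacts [Or.inl rfl, hmono a b h]
  · rcases (hQ _ _).1 hay with h | h
    · exact ⟨a, P.refl a, h⟩
    · obtain ⟨a', ha', rfl⟩ := hback a y h
      exact ⟨a', (hP a a').2 (Or.inr ha'), rfl⟩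

theorem exists_map_dep_eq_of_stack {G B : Frame} [Finite G.W] [Finite B.W] (hBw : B.WidthLeTwo)
    {r : B.W} (hr : ∀ w, B.le r w) {j : ℕ}
    (hstack : ∀ i, j ≤ i → i < j + B.dep r →
      ∃ a b : G.W, a ≠ b ∧ G.depthEq a i ∧ G.depthEq b i) :
    ∃ f : G.W → B.W, (∀ u, G.dep u < j + B.dep r → B.dep (f u) = G.dep u - j + 1) ∧
      ∀ y, ∃ w, G.dep w + 1 = j + B.dep y ∧ f w = y := by
  classical
  set D := B.dep r
  have hD := B.one_le_dep r
  have : Nonempty G.W := let ⟨a, _⟩ := hstack j le_rfl (by omega); ⟨a⟩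
  have : Nonempty B.W := ⟨r⟩
  choose! c c' hc using hstack
  choose! p q hpq using fun e (he₁ : 1 ≤ e) (he : e ≤ D) =>
    Frame.exists_dep_eq_iff_eq_or_eq hBw he₁ he
  -- by truncated subtraction, everything above depth `j` lands in layer `1`
  let f : G.W → B.W := fun u =>
    if u = c (G.dep u) then p (G.dep u - j + 1) else q (G.dep u - j + 1)
  have hf_c : ∀ i, j ≤ i → i < j + D → f (c i) = p (i - j + 1) ∧ f (c' i) = q (i - j + 1) := by
    intro i hi₁ hi₂
    obtain ⟨hne, hci, hc'i⟩ := hc i hi₁ hi₂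
    rw [G.depthEq_iff] at hci hc'i
    simp only [f, ← hci, ← hc'i, if_neg (Ne.symm hne), if_true, and_self]
  refine ⟨f, fun u hu => ?_, fun y => ?_⟩
  · have h := hpq (G.dep u - j + 1) (by omega) (by omega)
    by_cases hu : u = c (G.dep u)
    · simpa only [f, if_pos hu] using (h _).2 (Or.inl rfl)
    · simpa only [f, if_neg hu] using (h _).2 (Or.inr rfl)
  · have he : 1 ≤ B.dep y ∧ B.dep y ≤ D := ⟨B.one_le_dep y, B.dep_le_of_le (hr y)⟩
    obtain ⟨-, hci, hc'i⟩ := hc (j + B.dep y - 1) (by omega) (by omega)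
    obtain ⟨hfc, hfc'⟩ := hf_c (j + B.dep y - 1) (by omega) (by omega)
    rw [G.depthEq_iff] at hci hc'i
    rw [show j + B.dep y - 1 - j + 1 = B.dep y by omega] at hfc hfc'
    rcases ((hpq _ he.1 he.2) y).1 rfl with hy | hy
    · exact ⟨_, by omega, hfc.trans hy.symm⟩
    · exact ⟨_, by omega, hfc'.trans hy.symm⟩

theorem exists_pMorphicImage_up_of_hasStack {G B : Frame} [Finite G.W] [Finite B.W]
    (hG : G.IsLayered) (hB : B.IsLayered) (hBw : B.WidthLeTwo)
    (hBmax : ∀ x y, B.IsMaximal x → B.IsMaximal y → x = y) {r : B.W} (hr : ∀ w, B.le r w)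
    (hstack : HasStack G (B.dep r)) : ∃ z : G.W, PMorphicImage (G.up z) B := by
  obtain ⟨j, hj⟩ := hstack
  obtain ⟨f, hf_dep, hf_onto⟩ := exists_map_dep_eq_of_stack hBw hr hj
  obtain ⟨z, hz, hfz⟩ := hf_onto r
  have hdep_up : ∀ u : (G.up z).W, G.dep u.1 < j + B.dep r := fun u => by
    have := G.dep_le_of_le u.2
    omega
  have hpm : IsPMorphism (G.up z) B (fun u => f u.1) := by
    refine isPMorphism_of_rank (fun u => G.dep u.1) B.dep
      (fun a b => hG.le_iff.trans (or_congr_left Subtype.coe_inj)) (fun _ _ => hB.le_iff)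
      (fun a b hab => ?_) (fun a y hy => ?_)
    · have hb := hf_dep _ (hdep_up b)
      have ha := hf_dep _ (hdep_up a)
      change G.dep b.1 < G.dep a.1 at hab
      by_cases haj : G.dep a.1 ≤ j
      · exact Or.inl (hBmax _ _ (Frame.isMaximal_of_dep_eq_one (by omega))
          (Frame.isMaximal_of_dep_eq_one (by omega)))
      · exact Or.inr (by omega)
    · obtain ⟨w, hw, rfl⟩ := hf_onto y
      rw [hf_dep _ (hdep_up a)] at hy
      have haw : G.dep w < G.dep a.1 := by have := B.one_le_dep (f w); omega
      exact ⟨⟨w, G.trans _ _ _ a.2 (hG _ _ haw)⟩, haw, rfl⟩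
  exact ⟨z, .of_isPMorphism hpm (x := ⟨z, G.refl z⟩) (hfz ▸ hr)⟩

theorem statement17_general (L' : Set Form)
    (hBox : BoxLogic ⊂ L') :
    ∃ k : ℕ, ∀ F : Frame, Finite F.W → F.Rooted →
      (∀ φ ∈ L', F.Valid φ) → ¬ HasStack F (k + 1) := by
  obtain ⟨φ, hφL', hφ⟩ := Set.exists_of_ssubset hBox
  obtain ⟨B, _, r, hr, hBφ, hBw, hBmax, hB⟩ := exists_frame_not_valid_of_not_mem_boxLogic hφ
  refine ⟨B.dep r - 1, fun F _ hroot hF hstack => ?_⟩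
  rw [Nat.sub_add_cancel (B.one_le_dep r)] at hstack
  have hFl := Frame.isLayered_of_valid_wPLax hroot (hF _ (hBox.1 wPLax_mem_boxLogic))
  obtain ⟨z, hz⟩ := exists_pMorphicImage_up_of_hasStack hFl hB hBw hBmax hr hstack
  exact hBφ (((hF φ hφL').up z).of_pMorphicImage hz)

/-- Let `L'` be a superintuitionistic logic of infinite depth
properly extending `Box`. Then there is `k` such that every finite rooted
poset which is a frame for `L'` has stack-depth at most `k`. -/
theorem statement17 (L' : Set Form) (hL : IsSILogic L')
    (hBox : BoxLogic ⊂ L') (hdep : ¬ FiniteDepth L') :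
    ∃ k : ℕ, ∀ F : Frame, Finite F.W → F.Rooted →
      (∀ φ ∈ L', F.Valid φ) → ¬ HasStack F (k + 1) :=
  statement17_general L' hBox
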